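/- For the function Θ(t,x,y) = exp((1 - cosh(2t))(x²+y²)/(2 sinh(2t))), there exists c > 0 such that 0 < Θ(t,x,y) ≤ exp(-c t (x²+y²)) for all 0 < t ≤ 1 and x, y > 0, and there exists c' > 0 with 0 < Θ(t,x,y) ≤ exp(-c'(x²+y²)) for all t ≥ 1 and x, y > 0. -/

import Mathlib

/-!
Since `cosh (2t) - 1 = 2 sinh² t` and `sinh (2t) = 2 sinh t cosh t`, the exponent of `Θ` is
`-(tanh t / 2) (x² + y²)`. Both bounds are then lower bounds for `tanh`: on `[0, 1]`,
`tanh t ≥ t / cosh 1` because `sinh t ≥ t` and `cosh t ≤ cosh 1`, and on `[1, ∞)`,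
`tanh t ≥ tanh 1` by monotonicity.
-/

open Real Set

noncomputable def Θ (t x y : ℝ) : ℝ :=
  Real.exp ((1 - Real.cosh (2*t)) * (x^2 + y^2) / (2 * Real.sinh (2*t)))

namespace Real

theorem tanh_monotone : Monotone tanh := fun a b hab => by
  by_contra! h
  have := artanh_lt_artanh (neg_one_lt_tanh b) (tanh_lt_one a) h
  rw [artanh_tanh, artanh_tanh] at this
  linarith

theorem tanh_pos {t : ℝ} (ht : 0 < t) : 0 < tanh t := by
  rw [tanh_eq_sinh_div_cosh]
  exact div_pos (sinh_pos_iff.2 ht) (cosh_pos t)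

theorem div_cosh_one_le_tanh {t : ℝ} (h₀ : 0 ≤ t) (h₁ : t ≤ 1) : t / cosh 1 ≤ tanh t := by
  have hsinh : t ≤ sinh t := self_le_sinh_iff.2 h₀
  have hcosh : cosh t ≤ cosh 1 := cosh_le_cosh.2 (by rwa [abs_of_nonneg h₀, abs_one])
  rw [tanh_eq_sinh_div_cosh]
  exact div_le_div₀ (h₀.trans hsinh) hsinh (cosh_pos t) hcosh

theorem one_sub_cosh_two_mul_div_sinh_two_mul (t : ℝ) :
    (1 - cosh (2 * t)) / (2 * sinh (2 * t)) = -(tanh t / 2) := by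
  rcases eq_or_ne t 0 with rfl | ht
  · simp
  rw [cosh_two_mul, sinh_two_mul, tanh_eq_sinh_div_cosh, cosh_sq]
  field_simp [(cosh_pos t).ne', sinh_ne_zero.2 ht]
  ring

end Real

theorem Θ_eq (t x y : ℝ) : Θ t x y = exp (-(tanh t / 2) * (x ^ 2 + y ^ 2)) := by
  rw [Θ, mul_div_right_comm, one_sub_cosh_two_mul_div_sinh_two_mul]

theorem Θ_le_of_le_half_tanh {a t : ℝ} (x y : ℝ) (h : a ≤ tanh t / 2) :
    Θ t x y ≤ exp (-a * (x ^ 2 + y ^ 2)) := by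
  rw [Θ_eq, exp_le_exp]
  gcongr

theorem theta_bounds :
    (∃ c : ℝ, 0 < c ∧ ∀ t x y : ℝ, 0 < t → t ≤ 1 → 0 < x → 0 < y →
      0 < Θ t x y ∧ Θ t x y ≤ Real.exp (-c * t * (x^2 + y^2))) ∧
    (∃ c' : ℝ, 0 < c' ∧ ∀ t x y : ℝ, 1 ≤ t → 0 < x → 0 < y →
      0 < Θ t x y ∧ Θ t x y ≤ Real.exp (-c' * (x^2 + y^2))) := by
  constructor
  · refine ⟨(2 * cosh 1)⁻¹, by positivity, fun t x y ht ht₁ _ _ => ⟨exp_pos _, ?_⟩⟩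
    rw [neg_mul]
    apply Θ_le_of_le_half_tanh
    calc (2 * cosh 1)⁻¹ * t = t / cosh 1 / 2 := by ring
      _ ≤ tanh t / 2 := by gcongr; exact div_cosh_one_le_tanh ht.le ht₁
  · refine ⟨tanh 1 / 2, half_pos (tanh_pos one_pos), fun t x y ht _ _ => ⟨exp_pos _, ?_⟩⟩
    exact Θ_le_of_le_half_tanh x y (by linarith [tanh_monotone ht])
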